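/- If B, C are self-adjoint bounded linear operators on a complex Hilbert space H, then (1/2)‖B + C‖ ≤ w([[0, B],[C, 0]]) and (1/2)‖B − C‖ ≤ w([[0, B],[C, 0]]) ≤ (1/2)‖|B| + |C|‖. -/

import Mathlib

/-!
Testing `T` on `(x, x)` and `(x, i x)` gives `|⟪(B ± C) x, x⟫| ≤ 2 w(T) ‖x‖²`, and the norm of a
self-adjoint operator is the supremum of `|⟪S x, x⟫|` over the unit sphere.

For the upper bound, write `S = S⁺ - S⁻` and `|S| = S⁺ + S⁻`. Cauchy–Schwarz for the positive
parts gives the mixed inequality `|⟪S x, y⟫| ≤ (⟪|S| x, x⟫ + ⟪|S| y, y⟫) / 2`; applied to both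
off-diagonal terms of `⟪T u, u⟫ = ⟪B u₁, u₀⟫ + ⟪C u₀, u₁⟫` it bounds this quantity by
`(⟪(|B| + |C|) u₀, u₀⟫ + ⟪(|B| + |C|) u₁, u₁⟫) / 2 ≤ ‖|B| + |C|‖ / 2` on the unit sphere.
-/

/-- The numerical radius of a bounded linear operator on a complex Hilbert space:
`w(T) = sup {|⟨Tx, x⟩| : ‖x‖ = 1}`. -/
noncomputable def numRad {H : Type*} [NormedAddCommGroup H] [InnerProductSpace ℂ H]
    (T : H →L[ℂ] H) : ℝ :=
  sSup {r : ℝ | ∃ x : H, ‖x‖ = 1 ∧ r = ‖(inner ℂ (T x) x : ℂ)‖}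

/-- The absolute value `|T| = (T*T)^{1/2}` of a bounded operator. -/
noncomputable def absOp {H : Type*} [NormedAddCommGroup H] [InnerProductSpace ℂ H]
    [CompleteSpace H] (T : H →L[ℂ] H) : H →L[ℂ] H :=
  CFC.sqrt (ContinuousLinearMap.adjoint T * T)

/-- The numerical radius of a complex `n × n` matrix. -/
noncomputable def numRadMat {n : ℕ} (M : Matrix (Fin n) (Fin n) ℂ) : ℝ :=
  numRad (Matrix.toEuclideanCLM (𝕜 := ℂ) M)

open ContinuousLinearMap RCLike
open scoped InnerProductSpace

lemma ContinuousLinearMap.norm_inner_self_le_opNorm_mul_sq {𝕜 H : Type*} [RCLike 𝕜]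
    [NormedAddCommGroup H] [InnerProductSpace 𝕜 H] (T : H →L[𝕜] H) (x : H) :
    ‖⟪T x, x⟫_𝕜‖ ≤ ‖T‖ * ‖x‖ ^ 2 :=
  calc ‖⟪T x, x⟫_𝕜‖ ≤ ‖T x‖ * ‖x‖ := norm_inner_le_norm _ _
    _ ≤ ‖T‖ * ‖x‖ * ‖x‖ := by gcongr; exact T.le_opNorm x
    _ = ‖T‖ * ‖x‖ ^ 2 := by ring

section NumericalRadius

variable {H : Type*} [NormedAddCommGroup H] [InnerProductSpace ℂ H]

lemma norm_inner_self_le_numRad (T : H →L[ℂ] H) {x : H} (hx : ‖x‖ = 1) :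
    ‖⟪T x, x⟫_ℂ‖ ≤ numRad T := by
  refine le_csSup ⟨‖T‖, ?_⟩ ⟨x, hx, rfl⟩
  rintro _ ⟨y, hy, rfl⟩
  simpa [hy] using T.norm_inner_self_le_opNorm_mul_sq y

lemma norm_inner_self_le_numRad_mul_sq (T : H →L[ℂ] H) (x : H) :
    ‖⟪T x, x⟫_ℂ‖ ≤ numRad T * ‖x‖ ^ 2 := by
  rcases eq_or_ne x 0 with rfl | hx
  · simp
  have hx' : 0 < ‖x‖ := norm_pos_iff.mpr hx
  have h := norm_inner_self_le_numRad T (x := (‖x‖⁻¹ : ℂ) • x) (by simp [norm_smul, hx'.ne'])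
  rw [map_smul, inner_smul_left, inner_smul_right, norm_mul, norm_mul] at h
  simp only [map_inv₀, Complex.conj_ofReal, norm_inv, Complex.norm_real, norm_norm,
    ← mul_assoc] at h
  rw [← mul_inv, ← sq, inv_mul_le_iff₀ (by positivity)] at h
  linarith

lemma numRad_nonneg (T : H →L[ℂ] H) : 0 ≤ numRad T :=
  Real.sSup_nonneg (by rintro _ ⟨x, -, rfl⟩; positivity)

lemma numRad_le {T : H →L[ℂ] H} {r : ℝ} (hr : 0 ≤ r)
    (h : ∀ x : H, ‖x‖ = 1 → ‖⟪T x, x⟫_ℂ‖ ≤ r) : numRad T ≤ r :=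
  Real.sSup_le (by rintro _ ⟨x, hx, rfl⟩; exact h x hx) hr

end NumericalRadius

lemma LinearMap.IsSymmetric.norm_le_of_norm_inner_self_le {H : Type*} [NormedAddCommGroup H]
    [InnerProductSpace ℂ H] {S : H →L[ℂ] H} (hS : (S : H →ₗ[ℂ] H).IsSymmetric) {r : ℝ}
    (hr : 0 ≤ r) (h : ∀ x : H, ‖⟪S x, x⟫_ℂ‖ ≤ r * ‖x‖ ^ 2) : ‖S‖ ≤ r := by
  rw [S.norm_eq_iSup_rayleighQuotient hS]
  refine ciSup_le fun x => ?_
  rw [rayleighQuotient, reApplyInnerSelf_apply, abs_div, abs_sq]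
  exact div_le_of_le_mul₀ (sq_nonneg _) hr ((abs_re_le_norm _).trans (h x))

section AbsoluteValue

variable {H : Type*} [NormedAddCommGroup H] [InnerProductSpace ℂ H] [CompleteSpace H]

lemma absOp_eq_posPart_add_negPart {S : H →L[ℂ] H} (hS : IsSelfAdjoint S) :
    absOp S = S⁺ + S⁻ :=
  (CFC.posPart_add_negPart S hS).symm

lemma norm_inner_le_of_nonneg {P : H →L[ℂ] H} (hP : 0 ≤ P) (x y : H) :
    ‖⟪P x, y⟫_ℂ‖ ≤ (re ⟪P x, x⟫_ℂ + re ⟪P y, y⟫_ℂ) / 2 := by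
  have hR : IsSelfAdjoint (CFC.sqrt P) := (CFC.sqrt_nonneg P).isSelfAdjoint
  have hsqrt : ∀ u v : H, ⟪P u, v⟫_ℂ = ⟪CFC.sqrt P u, CFC.sqrt P v⟫_ℂ := fun u v => by
    conv_lhs => rw [← CFC.sqrt_mul_sqrt_self P hP]
    rw [mul_apply_eq_comp, ← adjoint_inner_right, hR.adjoint_eq]
  rw [hsqrt, hsqrt, hsqrt, inner_self_eq_norm_sq, inner_self_eq_norm_sq]
  calc ‖⟪CFC.sqrt P x, CFC.sqrt P y⟫_ℂ‖ ≤ ‖CFC.sqrt P x‖ * ‖CFC.sqrt P y‖ :=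
        norm_inner_le_norm _ _
    _ ≤ (‖CFC.sqrt P x‖ ^ 2 + ‖CFC.sqrt P y‖ ^ 2) / 2 := by
        nlinarith [sq_nonneg (‖CFC.sqrt P x‖ - ‖CFC.sqrt P y‖)]

lemma IsSelfAdjoint.norm_inner_le_absOp {S : H →L[ℂ] H} (hS : IsSelfAdjoint S) (x y : H) :
    ‖⟪S x, y⟫_ℂ‖ ≤ (re ⟪absOp S x, x⟫_ℂ + re ⟪absOp S y, y⟫_ℂ) / 2 := by
  have hpos := norm_inner_le_of_nonneg (CFC.posPart_nonneg S) x y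
  have hneg := norm_inner_le_of_nonneg (CFC.negPart_nonneg S) x y
  have hsplit : ‖⟪S x, y⟫_ℂ‖ ≤ ‖⟪S⁺ x, y⟫_ℂ‖ + ‖⟪S⁻ x, y⟫_ℂ‖ := by
    conv_lhs => rw [← CFC.posPart_sub_negPart S hS]
    rw [sub_apply, inner_sub_left]
    exact norm_sub_le _ _
  simp only [absOp_eq_posPart_add_negPart hS, add_apply, inner_add_left, map_add]
  linarith

end AbsoluteValue

section BlockOperator

variable {H : Type*} [NormedAddCommGroup H] [InnerProductSpace ℂ H]
  {B C : H →L[ℂ] H} {T : PiLp 2 (fun _ : Fin 2 => H) →L[ℂ] PiLp 2 (fun _ : Fin 2 => H)}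

lemma inner_apply_self_of_offDiagonal
    (hT : ∀ x : PiLp 2 (fun _ : Fin 2 => H), T x 0 = B (x 1) ∧ T x 1 = C (x 0))
    (u : PiLp 2 (fun _ : Fin 2 => H)) :
    ⟪T u, u⟫_ℂ = ⟪B (u 1), u 0⟫_ℂ + ⟪C (u 0), u 1⟫_ℂ := by
  rw [PiLp.inner_apply, Fin.sum_univ_two, (hT u).1, (hT u).2]

lemma norm_inner_add_inner_le_numRad_mul
    (hT : ∀ x : PiLp 2 (fun _ : Fin 2 => H), T x 0 = B (x 1) ∧ T x 1 = C (x 0)) (a b : H) :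
    ‖⟪B b, a⟫_ℂ + ⟪C a, b⟫_ℂ‖ ≤ numRad T * (‖a‖ ^ 2 + ‖b‖ ^ 2) := by
  have h := norm_inner_self_le_numRad_mul_sq T (WithLp.toLp 2 ![a, b])
  rwa [inner_apply_self_of_offDiagonal hT, PiLp.norm_sq_eq_of_L2, Fin.sum_univ_two] at h

lemma half_norm_add_le_numRad
    (hT : ∀ x : PiLp 2 (fun _ : Fin 2 => H), T x 0 = B (x 1) ∧ T x 1 = C (x 0))
    (hBC : ((B + C : H →L[ℂ] H) : H →ₗ[ℂ] H).IsSymmetric) :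
    1 / 2 * ‖B + C‖ ≤ numRad T := by
  have := hBC.norm_le_of_norm_inner_self_le (r := 2 * numRad T)
    (by linarith [numRad_nonneg T]) fun x => by
      rw [add_apply, inner_add_left]
      linarith [norm_inner_add_inner_le_numRad_mul hT x x]
  linarith

lemma half_norm_sub_le_numRad
    (hT : ∀ x : PiLp 2 (fun _ : Fin 2 => H), T x 0 = B (x 1) ∧ T x 1 = C (x 0))
    (hBC : ((B - C : H →L[ℂ] H) : H →ₗ[ℂ] H).IsSymmetric) :
    1 / 2 * ‖B - C‖ ≤ numRad T := by
  have := hBC.norm_le_of_norm_inner_self_le (r := 2 * numRad T)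
    (by linarith [numRad_nonneg T]) fun x => by
      have h := norm_inner_add_inner_le_numRad_mul hT x (Complex.I • x)
      have hrot : ⟪B (Complex.I • x), x⟫_ℂ + ⟪C x, Complex.I • x⟫_ℂ =
          -Complex.I * ⟪(B - C) x, x⟫_ℂ := by
        simp only [map_smul, inner_smul_left, inner_smul_right, Complex.conj_I, sub_apply,
          inner_sub_left]
        ring
      rw [hrot, norm_mul, norm_neg, Complex.norm_I, one_mul, norm_smul, Complex.norm_I,
        one_mul] at h
      linarith
  linarith

variable [CompleteSpace H]

lemma numRad_le_half_norm_absOp_add (hB : IsSelfAdjoint B) (hC : IsSelfAdjoint C)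
    (hT : ∀ x : PiLp 2 (fun _ : Fin 2 => H), T x 0 = B (x 1) ∧ T x 1 = C (x 0)) :
    numRad T ≤ 1 / 2 * ‖absOp B + absOp C‖ := by
  set A := absOp B + absOp C
  have hA : ∀ v : H, re ⟪absOp B v, v⟫_ℂ + re ⟪absOp C v, v⟫_ℂ ≤ ‖A‖ * ‖v‖ ^ 2 := fun v =>
    calc re ⟪absOp B v, v⟫_ℂ + re ⟪absOp C v, v⟫_ℂ = re ⟪A v, v⟫_ℂ := by
          rw [add_apply, inner_add_left, map_add]
      _ ≤ ‖A‖ * ‖v‖ ^ 2 := (re_le_norm _).trans (A.norm_inner_self_le_opNorm_mul_sq v)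
  refine numRad_le (by positivity) fun u hu => ?_
  have hu2 : ‖u 0‖ ^ 2 + ‖u 1‖ ^ 2 = 1 := by
    rw [← Fin.sum_univ_two (fun i => ‖u i‖ ^ 2), ← PiLp.norm_sq_eq_of_L2, hu, one_pow]
  calc ‖⟪T u, u⟫_ℂ‖ ≤ ‖⟪B (u 1), u 0⟫_ℂ‖ + ‖⟪C (u 0), u 1⟫_ℂ‖ := by
        rw [inner_apply_self_of_offDiagonal hT]; exact norm_add_le _ _
    _ ≤ (re ⟪absOp B (u 1), u 1⟫_ℂ + re ⟪absOp B (u 0), u 0⟫_ℂ) / 2 +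
          (re ⟪absOp C (u 0), u 0⟫_ℂ + re ⟪absOp C (u 1), u 1⟫_ℂ) / 2 :=
        add_le_add (hB.norm_inner_le_absOp _ _) (hC.norm_inner_le_absOp _ _)
    _ ≤ (‖A‖ * ‖u 0‖ ^ 2 + ‖A‖ * ‖u 1‖ ^ 2) / 2 := by linarith [hA (u 0), hA (u 1)]
    _ = 1 / 2 * ‖A‖ := by rw [← mul_add, hu2]; ring

end BlockOperator

open ContinuousLinearMap
theorem stmt12 {H : Type*} [NormedAddCommGroup H] [InnerProductSpace ℂ H] [CompleteSpace H]
    (B C : H →L[ℂ] H) (hB : IsSelfAdjoint B) (hC : IsSelfAdjoint C)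
    (T : PiLp 2 (fun _ : Fin 2 => H) →L[ℂ] PiLp 2 (fun _ : Fin 2 => H))
    (hT : ∀ x : PiLp 2 (fun _ : Fin 2 => H), T x 0 = B (x 1) ∧ T x 1 = C (x 0)) :
    (1 / 2) * ‖B + C‖ ≤ numRad T ∧ (1 / 2) * ‖B - C‖ ≤ numRad T ∧
      numRad T ≤ (1 / 2) * ‖absOp B + absOp C‖ :=
  ⟨half_norm_add_le_numRad hT (hB.add hC).isSymmetric,
    half_norm_sub_le_numRad hT (hB.sub hC).isSymmetric,
    numRad_le_half_norm_absOp_add hB hC hT⟩
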